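/- Let S be a finite alphabet and let s̃ⁿ ∈ Sⁿ and s^{n̄} ∈ S^{n̄} satisfy N(s | s^{n̄}) ≥ N(s | s̃ⁿ) for every s ∈ S. Then the greedy matching procedure — which for each i = 1,…,n̄ sets κ(i) to the smallest unused index j with s̃ⱼ = sᵢ (and κ(i) = 0 if no such j exists) — uses up all indices in [1..n], i.e., for every j ∈ [1..n] there exists i ∈ [1..n̄] with κ(i) = j. -/
import Mathlib


open scoped BigOperators

variable {S : Type*} [DecidableEq S]

/-- Number of occurrences of `s0` among `u 1, …, u m` (1-indexed sequences). -/
def cntIcc {S : Type*} [DecidableEq S] (u : ℕ → S) (m : ℕ) (s0 : S) : ℕ :=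
  ((Finset.Icc 1 m).filter fun j => u j = s0).card

/-- The set of indices of `st 1, …, st n` already used by the greedy matching
procedure after processing `s 1, …, s i`. -/
def greedyUsed (st s : ℕ → S) (n : ℕ) : ℕ → Finset ℕ
  | 0 => ∅
  | i + 1 =>
    let c := (Finset.Icc 1 n).filter
      fun j => st j = s (i + 1) ∧ j ∉ greedyUsed st s n i
    if h : c.Nonempty then insert (c.min' h) (greedyUsed st s n i)
    else greedyUsed st s n i

/-- The greedy matching: `greedyKappa st s n i` is the smallest unused index
`j ∈ [1..n]` with `st j = s i`, and `0` if no such index exists. -/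
def greedyKappa (st s : ℕ → S) (n : ℕ) : ℕ → ℕ
  | 0 => 0
  | i + 1 =>
    let c := (Finset.Icc 1 n).filter
      fun j => st j = s (i + 1) ∧ j ∉ greedyUsed st s n i
    if h : c.Nonempty then c.min' h else 0

lemma cntIcc_succ (u : ℕ → S) (m : ℕ) (s0 : S) :
    cntIcc u (m + 1) s0 = cntIcc u m s0 + (if u (m + 1) = s0 then 1 else 0) := by
  unfold cntIcc
  rw [← Finset.insert_Icc_right_eq_Icc_add_one (by omega), Finset.filter_insert]
  split
  · rw [Finset.card_insert_of_notMem (by simp)]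
  · simp

lemma greedyUsed_subset (st s : ℕ → S) (n : ℕ) :
    ∀ i, greedyUsed st s n i ⊆ Finset.Icc 1 n := by
  intro i
  induction i with
  | zero => simp [greedyUsed]
  | succ i ih =>
    rw [greedyUsed]
    split
    · rename_i h
      intro j hj
      rcases Finset.mem_insert.mp hj with rfl | hj
      · exact Finset.mem_of_mem_filter _ (Finset.min'_mem _ h)
      · exact ih hj
    · exact ih

lemma usedCnt_eq (st s : ℕ → S) (n : ℕ) :
    ∀ i s0, ((greedyUsed st s n i).filter fun j => st j = s0).card
      = min (cntIcc st n s0) (cntIcc s i s0) := by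
  intro i
  induction i with
  | zero => intro s0; simp [greedyUsed, cntIcc]
  | succ i ih =>
    intro s0
    have hsub : ∀ t : S, ((greedyUsed st s n i).filter fun j => st j = t)
        ⊆ ((Finset.Icc 1 n).filter fun j => st j = t) :=
      fun t => Finset.filter_subset_filter _ (greedyUsed_subset st s n i)
    rw [greedyUsed, cntIcc_succ]
    split
    · rename_i h
      obtain ⟨hmIcc, hmst, hmU⟩ := Finset.mem_filter.mp (Finset.min'_mem _ h)
      -- strict: usedCnt i (s (i+1)) < cntIcc st n (s (i+1))
      have hlt : ((greedyUsed st s n i).filter fun j => st j = s (i+1)).card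
          < cntIcc st n (s (i+1)) := by
        apply Finset.card_lt_card
        rw [Finset.ssubset_iff_of_subset (hsub _)]
        exact ⟨Finset.min' _ h, Finset.mem_filter.mpr ⟨hmIcc, hmst⟩,
          fun hx => hmU (Finset.mem_of_mem_filter _ hx)⟩
      rw [ih (s (i+1))] at hlt
      have hle : cntIcc s i (s (i+1)) < cntIcc st n (s (i+1)) := by omega
      by_cases hs0 : s (i + 1) = s0
      · subst hs0
        rw [Finset.filter_insert, if_pos hmst,
          Finset.card_insert_of_notMem (fun hx => hmU (Finset.mem_of_mem_filter _ hx)),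
          ih, if_pos rfl]
        omega
      · rw [Finset.filter_insert, if_neg (by rw [hmst]; exact hs0), ih, if_neg hs0, Nat.add_zero]
    · rename_i h
      -- c empty: every j in Icc with st j = s(i+1) is used
      have hfull : ((greedyUsed st s n i).filter fun j => st j = s (i+1)).card
          = cntIcc st n (s (i+1)) := by
        apply le_antisymm (Finset.card_le_card (hsub _))
        apply Finset.card_le_card
        intro j hj
        rw [Finset.mem_filter] at hj
        refine Finset.mem_filter.mpr ⟨?_, hj.2⟩
        by_contra hjU
        exact h ⟨j, Finset.mem_filter.mpr ⟨hj.1, hj.2, hjU⟩⟩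
      rw [ih (s (i+1))] at hfull
      by_cases hs0 : s (i + 1) = s0
      · subst hs0
        rw [ih, if_pos rfl]
        omega
      · rw [ih, if_neg hs0, Nat.add_zero]

lemma mem_used_exists (st s : ℕ → S) (n : ℕ) :
    ∀ m, ∀ j ∈ greedyUsed st s n m, ∃ i ∈ Finset.Icc 1 m, greedyKappa st s n i = j := by
  intro m
  induction m with
  | zero => simp [greedyUsed]
  | succ m ih =>
    intro j hj
    rw [greedyUsed] at hj
    by_cases h : ((Finset.Icc 1 n).filter
        fun k => st k = s (m + 1) ∧ k ∉ greedyUsed st s n m).Nonempty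
    · rw [dif_pos h] at hj
      rcases Finset.mem_insert.mp hj with rfl | hj
      · exact ⟨m + 1, Finset.mem_Icc.mpr ⟨by omega, le_refl _⟩,
          by rw [greedyKappa]; rw [dif_pos h]⟩
      · obtain ⟨i, hi, hk⟩ := ih j hj
        rw [Finset.mem_Icc] at hi
        exact ⟨i, Finset.mem_Icc.mpr ⟨hi.1, by omega⟩, hk⟩
    · rw [dif_neg h] at hj
      obtain ⟨i, hi, hk⟩ := ih j hj
      rw [Finset.mem_Icc] at hi
      exact ⟨i, Finset.mem_Icc.mpr ⟨hi.1, by omega⟩, hk⟩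


/-- If `N(s | s^{n̄}) ≥ N(s | stⁿ)` for every `s ∈ S`, then the
greedy matching procedure run for `i = 1, …, n̄` uses up every index of
`[1..n]`: for every `j ∈ [1..n]` there is `i ∈ [1..n̄]` with `κ(i) = j`. -/
theorem stmt_9 (st s : ℕ → S) (n nb : ℕ) (hn : n ≤ nb)
    (hcount : ∀ s0 : S, cntIcc st n s0 ≤ cntIcc s nb s0) :
    ∀ j ∈ Finset.Icc 1 n, ∃ i ∈ Finset.Icc 1 nb, greedyKappa st s n i = j := by
  intro j hj
  apply mem_used_exists st s n nb j
  set s0 := st j with hs0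
  have hcard : ((greedyUsed st s n nb).filter fun k => st k = s0).card
      = ((Finset.Icc 1 n).filter fun k => st k = s0).card := by
    rw [usedCnt_eq]
    have := hcount s0
    unfold cntIcc at this ⊢
    omega
  have heq : ((greedyUsed st s n nb).filter fun k => st k = s0)
      = ((Finset.Icc 1 n).filter fun k => st k = s0) :=
    Finset.eq_of_subset_of_card_le
      (Finset.filter_subset_filter _ (greedyUsed_subset st s n nb)) hcard.ge
  have : j ∈ (greedyUsed st s n nb).filter fun k => st k = s0 := by
    rw [heq]; exact Finset.mem_filter.mpr ⟨hj, rfl⟩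
  exact Finset.mem_of_mem_filter _ this
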